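/- For a lattice L ⊂ ℝ² of covolume 1 and v ∈ ℝ², let r(L+v) := sup{r ≥ 0 : [−r,r]² ∩ (L+v) = ∅}. Then for all a > 0, ∫_{ℝ²/L} ℒ₁(1/(1 + a·r(L+v))) dv ≪ ℒ₁(1/(1+a)), uniformly over all a > 0 and all unimodular lattices L, where ℒ₁(x) = x·log(2+x^{-1}). -/

import Mathlib

open Real MeasureTheory Pointwise

/-- `ℒ₁(x) = x log(2 + x⁻¹)`. -/
noncomputable def scrL1 (x : ℝ) : ℝ := x * Real.log (2 + x⁻¹)

/-- For a lattice `L = gℤ²` and a point `v`, `rad g v` is the supremum of all `r ≥ 0`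
such that the square `[−r,r]²` is disjoint from the translated lattice `L + v`. -/
noncomputable def rad (g : Matrix (Fin 2) (Fin 2) ℝ) (v : Fin 2 → ℝ) : ℝ :=
  sSup {r : ℝ | 0 ≤ r ∧ ∀ m : Fin 2 → ℤ, ∃ i : Fin 2,
    r < |(g.mulVec (fun j => (m j : ℝ)) + v) i|}

noncomputable def phi (s : ℝ) : ℝ := Real.log (3 + s) / (1 + s)

lemma scrL1_eq_phi {s : ℝ} (hs : 0 ≤ s) : scrL1 (1 / (1 + s)) = phi s := by
  have h1 : (0:ℝ) < 1 + s := by linarith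
  unfold scrL1 phi
  rw [one_div, inv_inv, div_eq_inv_mul]
  ring_nf

lemma one_le_log_three {s : ℝ} (hs : 0 ≤ s) : 1 ≤ Real.log (3 + s) := by
  rw [show (1:ℝ) = Real.log (Real.exp 1) by rw [Real.log_exp]]
  apply Real.log_le_log (Real.exp_pos 1)
  have := Real.exp_one_lt_d9
  linarith

lemma phi_nonneg {s : ℝ} (hs : 0 ≤ s) : 0 ≤ phi s := by
  have := one_le_log_three hs
  have h1 : (0:ℝ) < 1 + s := by linarith
  unfold phi
  positivity

lemma phi_hasDeriv {x : ℝ} (hx0 : 0 < x) :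
    HasDerivAt phi (1/(3+x) * (1+x)⁻¹ + Real.log (3+x) * (-1/(1+x)^2)) x := by
  have h3 : (0:ℝ) < 3 + x := by linarith
  have h1 : (0:ℝ) < 1 + x := by linarith
  have hl : HasDerivAt (fun s : ℝ => Real.log (3 + s)) (1/(3+x)) x := by
    have h : HasDerivAt (fun s : ℝ => 3 + s) 1 x := (hasDerivAt_id x).const_add 3
    simpa using h.log h3.ne'
  have hi : HasDerivAt (fun s : ℝ => (1 + s)⁻¹) (-1/(1+x)^2) x := by
    have h : HasDerivAt (fun s : ℝ => 1 + s) 1 x := (hasDerivAt_id x).const_add 1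
    exact h.inv h1.ne'
  have h := hl.mul hi
  have e : phi = fun s => Real.log (3 + s) * (1 + s)⁻¹ := by
    funext s
    simp only [phi, div_eq_mul_inv]
  rw [e]
  exact h

lemma phi_anti : AntitoneOn phi (Set.Ici (0:ℝ)) := by
  have key : ∀ x : ℝ, 0 < x →
      1/(3+x) * (1+x)⁻¹ + Real.log (3+x) * (-1/(1+x)^2) ≤ 0 := by
    intro x hx0
    have h3 : (0:ℝ) < 3 + x := by linarith
    have h1 : (0:ℝ) < 1 + x := by linarith
    have hlog : 1 ≤ Real.log (3+x) := one_le_log_three hx0.le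
    have e1 : 1/(3+x) * (1+x)⁻¹ ≤ 1/(1+x)^2 := by
      rw [one_div, one_div, ← mul_inv, sq]
      apply inv_anti₀ (by positivity) (by nlinarith)
    have e2 : 1/(1+x)^2 ≤ Real.log (3+x) * (1/(1+x)^2) :=
      le_mul_of_one_le_left (by positivity) hlog
    have : Real.log (3+x) * (-1/(1+x)^2) = -(Real.log (3+x) * (1/(1+x)^2)) := by ring
    rw [this]
    linarith
  apply antitoneOn_of_deriv_nonpos (convex_Ici 0)
  · apply ContinuousOn.div
    · apply ContinuousOn.log
      · fun_prop
      · intro x hx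
        have h0 : (0:ℝ) ≤ x := hx
        intro h; linarith
    · fun_prop
    · intro x hx
      have h0 : (0:ℝ) ≤ x := hx
      intro h; linarith
  · intro x hx
    rw [interior_Ici] at hx
    exact ((phi_hasDeriv hx).differentiableAt).differentiableWithinAt
  · intro x hx
    rw [interior_Ici] at hx
    rw [(phi_hasDeriv hx).deriv]
    exact key x hx

lemma rad_nonneg (g : Matrix (Fin 2) (Fin 2) ℝ) (v : Fin 2 → ℝ) : 0 ≤ rad g v :=
  Real.sSup_nonneg (fun _ hr => hr.1)

lemma rad_bddAbove (g : Matrix (Fin 2) (Fin 2) ℝ) (v : Fin 2 → ℝ) :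
    BddAbove {r : ℝ | 0 ≤ r ∧ ∀ m : Fin 2 → ℤ, ∃ i : Fin 2,
      r < |(g.mulVec (fun j => (m j : ℝ)) + v) i|} := by
  refine ⟨‖v‖, fun r hr => ?_⟩
  obtain ⟨i, hi⟩ := hr.2 0
  have h0 : (fun j => (((0 : Fin 2 → ℤ) j : ℝ))) = (0 : Fin 2 → ℝ) := by
    funext j; simp
  rw [h0, Matrix.mulVec_zero, zero_add] at hi
  calc r ≤ |v i| := hi.le
    _ = ‖v i‖ := (Real.norm_eq_abs _).symm
    _ ≤ ‖v‖ := norm_le_pi_norm v i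

lemma exists_close_of_rad_le {g : Matrix (Fin 2) (Fin 2) ℝ} {t : Fin 2 → ℝ} {ρ : ℝ}
    (h0 : 0 < ρ) (h : rad g (g.mulVec t) ≤ ρ) :
    ∃ m : Fin 2 → ℤ, ‖g.mulVec (t + fun j => (m j : ℝ))‖ ≤ 2 * ρ := by
  by_contra hc
  push_neg at hc
  have mem : (2*ρ) ∈ {r : ℝ | 0 ≤ r ∧ ∀ m : Fin 2 → ℤ, ∃ i : Fin 2,
      r < |(g.mulVec (fun j => (m j : ℝ)) + (g.mulVec t)) i|} := by
    refine ⟨by linarith, fun m => ?_⟩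
    have hm := hc m
    rw [Matrix.mulVec_add] at hm
    by_contra hno
    push_neg at hno
    have : ‖g.mulVec (fun j => (m j : ℝ)) + g.mulVec t‖ ≤ 2*ρ := by
      rw [pi_norm_le_iff_of_nonneg (by linarith)]
      intro i
      rw [Real.norm_eq_abs]
      exact hno i
    rw [add_comm] at this
    linarith
  have h2 : 2*ρ ≤ rad g (g.mulVec t) := le_csSup (rad_bddAbove g _) mem
  linarith

/-- the fundamental box `[0,1)²` -/
def box : Set (Fin 2 → ℝ) := Set.univ.pi fun _ : Fin 2 => Set.Ico (0:ℝ) 1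

lemma box_eq_fd : box = ZSpan.fundamentalDomain (Pi.basisFun ℝ (Fin 2)) := by
  ext x
  simp [box, ZSpan.fundamentalDomain, Set.mem_pi, Pi.basisFun_repr]

lemma box_measurable : MeasurableSet box :=
  MeasurableSet.pi Set.countable_univ fun _ _ => measurableSet_Ico

lemma volume_box : volume box = 1 := by
  rw [box, volume_pi_pi]
  simp [Real.volume_Ico]

lemma mulVec_continuous (g : Matrix (Fin 2) (Fin 2) ℝ) :
    Continuous (fun t : Fin 2 → ℝ => g.mulVec t) := by
  have : (fun t : Fin 2 → ℝ => g.mulVec t) = ⇑(Matrix.toLin' g) := by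
    funext t; rw [Matrix.toLin'_apply]
  rw [this]
  exact LinearMap.continuous_of_finiteDimensional _

lemma volume_S (g : Matrix (Fin 2) (Fin 2) ℝ) (hg : g.det = 1) {ρ : ℝ} (hρ : 0 ≤ ρ) :
    volume ((fun t : Fin 2 → ℝ => g.mulVec t) ⁻¹' Metric.closedBall 0 ρ)
      = ENNReal.ofReal (4 * ρ^2) := by
  have h1 : (fun t : Fin 2 → ℝ => g.mulVec t) ⁻¹' Metric.closedBall 0 ρ
      = (Matrix.toLin' g) ⁻¹' Metric.closedBall 0 ρ := by
    rw [show (fun t : Fin 2 → ℝ => g.mulVec t) = ⇑(Matrix.toLin' g) from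
      funext fun t => (Matrix.toLin'_apply g t).symm]
  have hdet : LinearMap.det (Matrix.toLin' g) ≠ 0 := by
    rw [LinearMap.det_toLin', hg]; norm_num
  rw [h1, MeasureTheory.Measure.addHaar_preimage_linearMap volume hdet]
  rw [LinearMap.det_toLin', hg]
  have hball : Metric.closedBall (0 : Fin 2 → ℝ) ρ
      = Set.univ.pi fun i : Fin 2 => Set.Icc (-ρ) ρ := by
    rw [closedBall_pi _ hρ]
    congr 1; funext i
    simp [Real.closedBall_eq_Icc]
  rw [hball, volume_pi_pi]
  simp only [Real.volume_Icc]
  rw [show ρ - -ρ = 2*ρ by ring]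
  rw [Finset.prod_const, ← ENNReal.ofReal_pow (by linarith)]
  norm_num
  rw [show (2*ρ)^2 = 4*ρ^2 by ring]
  rw [ENNReal.ofReal_mul (by norm_num)]; norm_num

/-- image of `m : ℤ²` in the lattice `ℤ² ⊂ ℝ²` as a term of the span -/
def latt (m : Fin 2 → ℤ) :
    Submodule.span ℤ (Set.range (Pi.basisFun ℝ (Fin 2))) := by
  refine ⟨fun j => (m j : ℝ), ?_⟩
  have h : (fun j => (m j : ℝ)) = ∑ i : Fin 2, m i • (Pi.basisFun ℝ (Fin 2)) i := by
    funext j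
    simp [Pi.basisFun_apply, Finset.sum_apply, Pi.single_apply]
  rw [h]
  exact Submodule.sum_mem _ fun i _ =>
    Submodule.smul_mem _ _ (Submodule.subset_span ⟨i, rfl⟩)

lemma latt_injective : Function.Injective latt := by
  intro m m' h
  have h2 : ∀ j, (m j : ℝ) = (m' j : ℝ) := fun j =>
    congrFun (congrArg Subtype.val h) j
  funext j
  exact_mod_cast h2 j

instance : MeasurableVAdd
    (↥(Submodule.span ℤ (Set.range (Pi.basisFun ℝ (Fin 2))))) (Fin 2 → ℝ) where
  measurable_const_vadd c := by
    have h : (fun x : Fin 2 → ℝ => c +ᵥ x) = fun x => (c : Fin 2 → ℝ) + x := rfl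
    rw [h]; exact measurable_const.add measurable_id
  measurable_vadd_const x := by
    have h : (fun l : ↥(Submodule.span ℤ (Set.range (Pi.basisFun ℝ (Fin 2)))) => l +ᵥ x)
        = fun l : ↥(Submodule.span ℤ (Set.range (Pi.basisFun ℝ (Fin 2)))) =>
          (l : Fin 2 → ℝ) + x := rfl
    rw [h]; exact measurable_subtype_coe.add_const x

instance : VAddInvariantMeasure
    (↥(Submodule.span ℤ (Set.range (Pi.basisFun ℝ (Fin 2))))) (Fin 2 → ℝ) volume :=
  ⟨fun c s _ => by
    have h : ((c +ᵥ ·) : (Fin 2 → ℝ) → (Fin 2 → ℝ)) = fun x => (c : Fin 2 → ℝ) + x := rfl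
    rw [h]
    exact measure_preimage_add volume _ s⟩

lemma meas_E (g : Matrix (Fin 2) (Fin 2) ℝ) (hg : g.det = 1) {ρ : ℝ} (hρ : 0 ≤ ρ) :
    volume ({t : Fin 2 → ℝ | ∃ m : Fin 2 → ℤ,
        ‖g.mulVec (t + fun j => (m j : ℝ))‖ ≤ ρ} ∩ box)
      ≤ ENNReal.ofReal (4 * ρ^2) := by
  set S : Set (Fin 2 → ℝ) :=
    (fun t : Fin 2 → ℝ => g.mulVec t) ⁻¹' Metric.closedBall 0 ρ with hS
  have hE : {t : Fin 2 → ℝ | ∃ m : Fin 2 → ℤ,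
      ‖g.mulVec (t + fun j => (m j : ℝ))‖ ≤ ρ} ∩ box
      = ⋃ m : Fin 2 → ℤ,
        (((fun t => t + fun j => (m j : ℝ)) ⁻¹' S) ∩ box) := by
    ext t
    simp only [Set.mem_inter_iff, Set.mem_setOf_eq, Set.mem_iUnion, Set.mem_preimage,
      hS, mem_closedBall_zero_iff]
    tauto
  rw [hE]
  refine le_trans (measure_iUnion_le _) ?_
  have hterm : ∀ m : Fin 2 → ℤ,
      volume (((fun t => t + fun j => (m j : ℝ)) ⁻¹' S) ∩ box)
        = volume (S ∩ ((latt m) +ᵥ ZSpan.fundamentalDomain (Pi.basisFun ℝ (Fin 2)))) := by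
    intro m
    set c : Fin 2 → ℝ := fun j => (m j : ℝ) with hc
    have hset : ((fun t => t + c) ⁻¹' S) ∩ box
        = (fun t => t + c) ⁻¹' (S ∩ ((latt m) +ᵥ ZSpan.fundamentalDomain (Pi.basisFun ℝ (Fin 2)))) := by
      ext x
      simp only [Set.mem_inter_iff, Set.mem_preimage, ← box_eq_fd]
      constructor
      · rintro ⟨h1, h2⟩
        refine ⟨h1, ⟨x, h2, ?_⟩⟩
        show c + x = x + c
        exact add_comm c x
      · rintro ⟨h1, y, hy, hxy⟩
        refine ⟨h1, ?_⟩
        have hyx : y = x := by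
          have h4 : c + y = x + c := hxy
          have h5 : c + y = c + x := h4.trans (add_comm x c)
          exact add_left_cancel h5
        rwa [← hyx]
    rw [hset]
    exact measure_preimage_add_right volume c _
  calc ∑' m : Fin 2 → ℤ, volume (((fun t => t + fun j => (m j : ℝ)) ⁻¹' S) ∩ box)
      = ∑' m : Fin 2 → ℤ, volume (S ∩ ((latt m) +ᵥ ZSpan.fundamentalDomain (Pi.basisFun ℝ (Fin 2)))) := by
        exact tsum_congr hterm
    _ ≤ ∑' l : Submodule.span ℤ (Set.range (Pi.basisFun ℝ (Fin 2))),
          volume (S ∩ (l +ᵥ ZSpan.fundamentalDomain (Pi.basisFun ℝ (Fin 2)))) :=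
        ENNReal.tsum_comp_le_tsum_of_injective latt_injective _
    _ = volume S :=
        ((ZSpan.isAddFundamentalDomain (Pi.basisFun ℝ (Fin 2)) volume).measure_eq_tsum' S).symm
    _ = ENNReal.ofReal (4 * ρ^2) := volume_S g hg hρ

lemma Klem (a : ℝ) (ha : 1 ≤ a) :
    a ≤ 2^(Nat.clog 2 ⌈a⌉₊) ∧ (2:ℝ)^(Nat.clog 2 ⌈a⌉₊) ≤ 4*a := by
  set n := ⌈a⌉₊ with hn
  set K := Nat.clog 2 n with hK
  have ha0 : (0:ℝ) ≤ a := by linarith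
  constructor
  · calc a ≤ (n:ℝ) := Nat.le_ceil a
      _ ≤ ((2^K : ℕ) : ℝ) := by exact_mod_cast Nat.cast_le.mpr (Nat.le_pow_clog one_lt_two n)
      _ = 2^K := by push_cast; ring
  · by_cases h1 : n ≤ 1
    · have : K = 0 := by
        rw [hK]
        interval_cases n <;> simp
      rw [this]; norm_num; linarith
    · push_neg at h1
      have hKpos : 0 < K := Nat.clog_pos one_lt_two h1
      have h2 : 2^(K-1) < n := Nat.pow_pred_clog_lt_self one_lt_two h1
      have h3 : (2:ℕ)^K ≤ 2*n - 2 := by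
        have : 2^(K-1) ≤ n - 1 := by omega
        calc (2:ℕ)^K = 2 * 2^(K-1) := by
              rw [← pow_succ']
              congr 1
              omega
          _ ≤ 2 * (n-1) := by omega
          _ = 2*n - 2 := by omega
      have h4 : (n:ℝ) < a + 1 := Nat.ceil_lt_add_one ha0
      have h5 : ((2:ℕ)^K : ℝ) ≤ 2*(n:ℝ) - 2 := by
        have := (Nat.cast_le (α := ℝ)).mpr h3
        push_cast at this ⊢
        rw [Nat.cast_sub (by omega)] at this
        push_cast at this
        linarith
      have : (2:ℝ)^K = ((2:ℕ)^K : ℝ) := by push_cast; ring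
      rw [this]
      linarith

lemma Klem2 (a : ℝ) (ha : 1 ≤ a) :
    ((Nat.clog 2 ⌈a⌉₊ : ℝ) + 1) ≤ 4 * Real.log (3 + a) := by
  set K := Nat.clog 2 ⌈a⌉₊ with hK
  have h2 := (Klem a ha).2
  have ha0 : (0:ℝ) < a := by linarith
  have hlog : (K:ℝ) * Real.log 2 ≤ Real.log (4*a) := by
    rw [← Real.log_pow]
    exact Real.log_le_log (by positivity) h2
  have hlog2 : Real.log (4*a) = Real.log 4 + Real.log a :=
    Real.log_mul (by norm_num) ha0.ne'
  have e1 : Real.log 4 ≤ Real.log (3+a) := Real.log_le_log (by norm_num) (by linarith)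
  have e2 : Real.log a ≤ Real.log (3+a) := Real.log_le_log ha0 (by linarith)
  have e3 : (1:ℝ) ≤ Real.log (3+a) := by
    rw [show (1:ℝ) = Real.log (Real.exp 1) by rw [Real.log_exp]]
    apply Real.log_le_log (Real.exp_pos 1)
    have := Real.exp_one_lt_d9
    linarith
  have hl2 := Real.log_two_gt_d9
  have hKle : (K:ℝ) * Real.log 2 ≤ 2 * Real.log (3+a) := by linarith
  have : (K:ℝ) ≤ 3 * Real.log (3+a) := by
    nlinarith [Nat.cast_nonneg (α := ℝ) K]
  linarith

lemma sum_geom_bound (K : ℕ) :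
    ∑ k ∈ Finset.range (K+1), ((k:ℝ)+1) * 2^k ≤ ((K:ℝ)+1) * 2^(K+1) := by
  calc ∑ k ∈ Finset.range (K+1), ((k:ℝ)+1) * 2^k
      ≤ ∑ k ∈ Finset.range (K+1), ((K:ℝ)+1) * 2^k := by
        apply Finset.sum_le_sum
        intro k hk
        have : (k:ℝ) ≤ K := by
          have := Finset.mem_range.mp hk
          exact_mod_cast Nat.lt_succ_iff.mp this
        have h2 : (0:ℝ) ≤ 2^k := by positivity
        nlinarith
    _ = ((K:ℝ)+1) * ∑ k ∈ Finset.range (K+1), (2:ℝ)^k := by rw [Finset.mul_sum]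
    _ ≤ ((K:ℝ)+1) * 2^(K+1) := by
        apply mul_le_mul_of_nonneg_left _ (by positivity)
        rw [geom_sum_eq (by norm_num)]
        have : (0:ℝ) < 2 - 1 := by norm_num
        rw [show (2:ℝ) - 1 = 1 by norm_num, div_one]
        linarith [pow_pos (show (0:ℝ) < 2 by norm_num) (K+1)]

lemma d_bound (k : ℕ) : phi ((2^k - 1)/2) ≤ 2 * Real.log 3 * ((k:ℝ)+1) / 2^k := by
  have h2k : (1:ℝ) ≤ 2^k := one_le_pow₀ (by norm_num)
  have h2k0 : (0:ℝ) < 2^k := by positivity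
  have e1 : 3 + ((2:ℝ)^k - 1)/2 = (5 + 2^k)/2 := by ring
  have e2 : 1 + ((2:ℝ)^k - 1)/2 = (1 + 2^k)/2 := by ring
  have hnum : Real.log ((5 + (2:ℝ)^k)/2) ≤ ((k:ℝ)+1) * Real.log 3 := by
    have h3k : (2:ℝ)^k ≤ 3^k := pow_le_pow_left₀ (by norm_num) (by norm_num) k
    have hle : (5 + (2:ℝ)^k)/2 ≤ 3^(k+1) := by
      have : (3:ℝ)^(k+1) = 3 * 3^k := by rw [pow_succ]; ring
      nlinarith
    calc Real.log ((5 + (2:ℝ)^k)/2) ≤ Real.log (3^(k+1)) :=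
          Real.log_le_log (by positivity) hle
      _ = ((k:ℝ)+1) * Real.log 3 := by rw [Real.log_pow]; push_cast; ring
  have hnum0 : 0 ≤ ((k:ℝ)+1) * Real.log 3 := by
    have : (0:ℝ) ≤ Real.log 3 := Real.log_nonneg (by norm_num)
    positivity
  unfold phi
  rw [e1, e2]
  calc Real.log ((5 + (2:ℝ)^k)/2) / ((1+2^k)/2)
      = 2 * Real.log ((5 + (2:ℝ)^k)/2) / (1+2^k) := by
        rw [div_div_eq_mul_div]; ring
    _ ≤ 2 * (((k:ℝ)+1) * Real.log 3) / 2^k := by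
        apply div_le_div₀ (by positivity) (by linarith) h2k0 (by linarith)
    _ = 2 * Real.log 3 * ((k:ℝ)+1) / 2^k := by ring

lemma measurable_Eset (g : Matrix (Fin 2) (Fin 2) ℝ) (ρ : ℝ) :
    MeasurableSet {t : Fin 2 → ℝ | ∃ m : Fin 2 → ℤ,
      ‖g.mulVec (t + fun j => (m j : ℝ))‖ ≤ ρ} := by
  have he : {t : Fin 2 → ℝ | ∃ m : Fin 2 → ℤ, ‖g.mulVec (t + fun j => (m j : ℝ))‖ ≤ ρ}
      = ⋃ m : Fin 2 → ℤ, {t : Fin 2 → ℝ | ‖g.mulVec (t + fun j => (m j : ℝ))‖ ≤ ρ} := by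
    ext t; simp [Set.mem_iUnion]
  rw [he]
  refine MeasurableSet.iUnion fun m => ?_
  have hcont : Continuous fun t : Fin 2 → ℝ => ‖g.mulVec (t + fun j => (m j : ℝ))‖ :=
    ((mulVec_continuous g).comp (continuous_id.add continuous_const)).norm
  exact (isClosed_le hcont continuous_const).measurableSet

/-- For any unimodular lattice `L = gℤ² ⊂ ℝ²` (covolume one) and any `a > 0`,
`∫_{ℝ²/L} ℒ₁(1/(1 + a·r(L+v))) dv ≪ ℒ₁(1/(1+a))` uniformly over `a` and `L`;
here the quotient `ℝ²/L` is parametrized by the fundamental domain `{g t : t ∈ [0,1)²}`,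
which has Lebesgue measure `|det g| = 1`. -/
theorem integral_rad_bound :
    ∃ C : ℝ, 0 < C ∧ ∀ (g : Matrix (Fin 2) (Fin 2) ℝ), g.det = 1 → ∀ a : ℝ, 0 < a →
      (∫ t in (Set.univ.pi fun _ : Fin 2 => Set.Ico (0:ℝ) 1),
          scrL1 (1 / (1 + a * rad g (g.mulVec t))))
        ≤ C * scrL1 (1 / (1 + a)) := by
  classical
  have hL3 : (0:ℝ) < Real.log 3 := Real.log_pos (by norm_num)
  refine ⟨1 + 2048 * Real.log 3, by linarith, ?_⟩
  intro g hg a ha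
  have hIfin : IsFiniteMeasure (volume.restrict box) :=
    ⟨by rw [Measure.restrict_apply_univ, volume_box]; norm_num⟩
  have hRHS : scrL1 (1/(1+a)) = phi a := scrL1_eq_phi ha.le
  have harnn : ∀ t : Fin 2 → ℝ, 0 ≤ a * rad g (g.mulVec t) :=
    fun t => mul_nonneg ha.le (rad_nonneg g _)
  have hf0 : ∀ t : Fin 2 → ℝ, scrL1 (1 / (1 + a * rad g (g.mulVec t)))
      = phi (a * rad g (g.mulVec t)) := fun t => scrL1_eq_phi (harnn t)
  have hfnn : ∀ t : Fin 2 → ℝ, 0 ≤ scrL1 (1 / (1 + a * rad g (g.mulVec t))) :=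
    fun t => by rw [hf0 t]; exact phi_nonneg (harnn t)
  show (∫ t in box, scrL1 (1 / (1 + a * rad g (g.mulVec t))))
        ≤ (1 + 2048 * Real.log 3) * scrL1 (1 / (1 + a))
  rw [hRHS]
  by_cases hA : a < 1
  · -- small a
    have hbound : ∀ t : Fin 2 → ℝ, scrL1 (1 / (1 + a * rad g (g.mulVec t))) ≤ Real.log 3 := by
      intro t
      rw [hf0 t]
      have h1 : phi (a * rad g (g.mulVec t)) ≤ phi 0 :=
        phi_anti (Set.mem_Ici.mpr le_rfl) (Set.mem_Ici.mpr (harnn t)) (harnn t)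
      have h2 : phi 0 = Real.log 3 := by simp [phi]
      linarith
    have hstep : (∫ t in box, scrL1 (1 / (1 + a * rad g (g.mulVec t))))
        ≤ ∫ _t in box, Real.log 3 :=
      integral_mono_of_nonneg (Filter.Eventually.of_forall hfnn) (integrable_const _)
        (Filter.Eventually.of_forall hbound)
    have hconst : (∫ _t in box, Real.log 3) = Real.log 3 := by
      rw [integral_const, measureReal_def, Measure.restrict_apply_univ, volume_box]
      simp
    have hphi1 : phi 1 ≤ phi a :=
      phi_anti (Set.mem_Ici.mpr ha.le) (Set.mem_Ici.mpr zero_le_one) hA.le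
    have hphi1v : phi 1 = Real.log 4 / 2 := by norm_num [phi]
    have hlog4 : Real.log 4 = 2 * Real.log 2 := by
      rw [show (4:ℝ) = 2^2 by norm_num, Real.log_pow]; push_cast; ring
    have hl2 := Real.log_two_gt_d9
    have hphia : 0 ≤ phi a := phi_nonneg ha.le
    calc (∫ t in box, scrL1 (1 / (1 + a * rad g (g.mulVec t))))
        ≤ Real.log 3 := by rw [hconst] at hstep; exact hstep
      _ ≤ (1 + 2048 * Real.log 3) * (Real.log 4 / 2) := by nlinarith
      _ = (1 + 2048 * Real.log 3) * phi 1 := by rw [hphi1v]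
      _ ≤ (1 + 2048 * Real.log 3) * phi a := by nlinarith
  · -- large a
    push_neg at hA
    set K := Nat.clog 2 ⌈a⌉₊ with hKdef
    obtain ⟨hK1, hK2⟩ := Klem a hA
    have hK3 := Klem2 a hA
    set E : ℕ → Set (Fin 2 → ℝ) := fun k =>
      {t : Fin 2 → ℝ | ∃ m : Fin 2 → ℤ,
        ‖g.mulVec (t + fun j => (m j : ℝ))‖ ≤ 2^(k+1)/a} with hEdef
    have hmeasE : ∀ k, MeasurableSet (E k) := fun k => measurable_Eset g _
    have hdnn : ∀ k : ℕ, 0 ≤ phi (((2:ℝ)^k - 1)/2) := by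
      intro k
      have h2k : (1:ℝ) ≤ 2^k := one_le_pow₀ (by norm_num)
      exact phi_nonneg (by linarith)
    set hfun : (Fin 2 → ℝ) → ℝ := fun t => phi (2^K) +
      ∑ k ∈ Finset.range (K+1),
        phi (((2:ℝ)^k - 1)/2) * (E k).indicator (fun _ => (1:ℝ)) t with hfundef
    have hsum_nonneg : ∀ t : Fin 2 → ℝ, ∀ k ∈ Finset.range (K+1),
        0 ≤ phi (((2:ℝ)^k - 1)/2) * (E k).indicator (fun _ => (1:ℝ)) t := by
      intro t k _
      exact mul_nonneg (hdnn k) (Set.indicator_nonneg (fun _ _ => zero_le_one) t)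
    have hpoint : ∀ t : Fin 2 → ℝ,
        scrL1 (1 / (1 + a * rad g (g.mulVec t))) ≤ hfun t := by
      intro t
      rw [hf0 t]
      set r := rad g (g.mulVec t) with hrdef
      have hr0 : 0 ≤ r := rad_nonneg g _
      have hphiK : 0 ≤ phi ((2:ℝ)^K) := phi_nonneg (by positivity)
      by_cases hcase : (2:ℝ)^K / a ≤ r
      · have h1 : (2:ℝ)^K ≤ a * r := by
          rw [div_le_iff₀ ha] at hcase
          nlinarith
        have h2 : phi (a*r) ≤ phi ((2:ℝ)^K) :=
          phi_anti (Set.mem_Ici.mpr (by positivity)) (Set.mem_Ici.mpr (harnn t)) h1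
        have h3 : 0 ≤ ∑ k ∈ Finset.range (K+1),
            phi (((2:ℝ)^k - 1)/2) * (E k).indicator (fun _ => (1:ℝ)) t :=
          Finset.sum_nonneg (hsum_nonneg t)
        simp only [hfundef]
        linarith
      · push_neg at hcase
        have hex : ∃ k : ℕ, r ≤ 2^k / a := ⟨K, hcase.le⟩
        set k0 := Nat.find hex with hk0def
        have hspec : r ≤ 2^k0 / a := Nat.find_spec hex
        have hk0K : k0 ≤ K := Nat.find_min' hex hcase.le
        have htE : t ∈ E k0 := by
          obtain ⟨m, hm⟩ := exists_close_of_rad_le (g := g) (t := t) (by positivity) hspec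
          refine ⟨m, ?_⟩
          have he : (2:ℝ)^(k0+1)/a = 2 * ((2:ℝ)^k0 / a) := by
            rw [pow_succ]; ring
          rw [he]
          exact hm
        have hlow : ((2:ℝ)^k0 - 1)/2 ≤ a * r := by
          rcases Nat.eq_zero_or_pos k0 with h0 | h0
          · rw [h0]
            norm_num
            exact mul_nonneg ha.le hr0
          · have hmin : ¬ (r ≤ 2^(k0-1) / a) := Nat.find_min hex (by omega)
            push_neg at hmin
            have h1 : (2:ℝ)^(k0-1) < a * r := by
              rw [div_lt_iff₀ ha] at hmin
              nlinarith
            have he : (2:ℝ)^(k0-1) = 2^k0 / 2 := by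
              rw [eq_div_iff (two_ne_zero), ← pow_succ]
              congr 1
              omega
            rw [he] at h1
            linarith
        have h1 : phi (a*r) ≤ phi (((2:ℝ)^k0 - 1)/2) := by
          have hnn : (0:ℝ) ≤ ((2:ℝ)^k0 - 1)/2 := by
            have h2k : (1:ℝ) ≤ 2^k0 := one_le_pow₀ (by norm_num)
            linarith
          exact phi_anti (Set.mem_Ici.mpr hnn) (Set.mem_Ici.mpr (harnn t)) hlow
        have hterm : phi (((2:ℝ)^k0 - 1)/2) * (E k0).indicator (fun _ => (1:ℝ)) t
            = phi (((2:ℝ)^k0 - 1)/2) := by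
          rw [Set.indicator_of_mem htE]
          ring
        have hsingle : phi (((2:ℝ)^k0 - 1)/2) * (E k0).indicator (fun _ => (1:ℝ)) t
            ≤ ∑ k ∈ Finset.range (K+1),
              phi (((2:ℝ)^k - 1)/2) * (E k).indicator (fun _ => (1:ℝ)) t :=
          Finset.single_le_sum (hsum_nonneg t) (Finset.mem_range.mpr (by omega))
        simp only [hfundef]
        rw [hterm] at hsingle
        linarith
    have hind_int : ∀ k : ℕ, Integrable
        (fun t => phi (((2:ℝ)^k - 1)/2) * (E k).indicator (fun _ => (1:ℝ)) t)
        (volume.restrict box) := fun k =>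
      (((integrable_const (1:ℝ)).indicator (hmeasE k)).const_mul _)
    have hsum_int : Integrable (fun t => ∑ k ∈ Finset.range (K+1),
        phi (((2:ℝ)^k - 1)/2) * (E k).indicator (fun _ => (1:ℝ)) t)
        (volume.restrict box) :=
      integrable_finset_sum _ (fun k _ => hind_int k)
    have hint : Integrable hfun (volume.restrict box) := by
      rw [hfundef]
      exact (integrable_const _).add hsum_int
    have hIle : (∫ t in box, scrL1 (1 / (1 + a * rad g (g.mulVec t))))
        ≤ ∫ t in box, hfun t :=
      integral_mono_of_nonneg (Filter.Eventually.of_forall hfnn) hint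
        (Filter.Eventually.of_forall hpoint)
    have hIh : (∫ t in box, hfun t) = phi ((2:ℝ)^K) +
        ∑ k ∈ Finset.range (K+1),
          phi (((2:ℝ)^k - 1)/2) * (volume (E k ∩ box)).toReal := by
      rw [hfundef]
      rw [integral_add (integrable_const _) hsum_int]
      congr 1
      · rw [integral_const, measureReal_def, Measure.restrict_apply_univ, volume_box]
        simp
      · rw [integral_finset_sum _ (fun k _ => hind_int k)]
        refine Finset.sum_congr rfl (fun k _ => ?_)
        rw [integral_const_mul, integral_indicator_const _ (hmeasE k), measureReal_def,
          Measure.restrict_apply (hmeasE k)]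
        simp [mul_comm]
    have hvol : ∀ k : ℕ, (volume (E k ∩ box)).toReal ≤ 4 * ((2:ℝ)^(k+1)/a)^2 := by
      intro k
      apply ENNReal.toReal_le_of_le_ofReal (by positivity)
      exact meas_E g hg (by positivity)
    have hsum_le : ∑ k ∈ Finset.range (K+1),
          phi (((2:ℝ)^k - 1)/2) * (volume (E k ∩ box)).toReal
        ≤ ∑ k ∈ Finset.range (K+1),
          (32 * Real.log 3 / a^2) * (((k:ℝ)+1) * 2^k) := by
      refine Finset.sum_le_sum (fun k _ => ?_)
      have heq : (2 * Real.log 3 * ((k:ℝ)+1)/2^k) * (4*((2:ℝ)^(k+1)/a)^2)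
          = (32 * Real.log 3 / a^2) * (((k:ℝ)+1) * 2^k) := by
        have h2k0 : (2:ℝ)^k ≠ 0 := by positivity
        rw [pow_succ]
        field_simp
        ring
      rw [← heq]
      exact mul_le_mul (d_bound k) (hvol k) ENNReal.toReal_nonneg
        (by positivity)
    have hsum2 : ∑ k ∈ Finset.range (K+1),
          (32 * Real.log 3 / a^2) * (((k:ℝ)+1) * 2^k)
        ≤ (32 * Real.log 3 / a^2) * (((K:ℝ)+1) * 2^(K+1)) := by
      rw [← Finset.mul_sum]
      exact mul_le_mul_of_nonneg_left (sum_geom_bound K) (by positivity)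
    have hfinal : (32 * Real.log 3 / a^2) * (((K:ℝ)+1) * 2^(K+1))
        ≤ 2048 * Real.log 3 * phi a := by
      have hG1 : (1:ℝ) ≤ Real.log (3+a) := one_le_log_three (by linarith)
      have h2K1 : (2:ℝ)^(K+1) ≤ 8 * a := by
        rw [pow_succ]
        nlinarith
      have hstep1 : ((K:ℝ)+1) * 2^(K+1) ≤ (4 * Real.log (3+a)) * (8*a) := by
        apply mul_le_mul hK3 h2K1 (by positivity) (by nlinarith)
      have hphia : phi a = Real.log (3+a) / (1+a) := rfl
      rw [hphia]
      have ha1 : (0:ℝ) < 1 + a := by linarith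
      rw [← mul_div_assoc, div_mul_eq_mul_div, div_le_div_iff₀ (by positivity) ha1]
      nlinarith [mul_le_mul_of_nonneg_left hstep1
          (show (0:ℝ) ≤ 32 * Real.log 3 * (1+a) by positivity),
        mul_nonneg (mul_nonneg hL3.le (le_trans zero_le_one hG1)) ha.le, hA, hL3, hG1]
    have hphiKa : phi ((2:ℝ)^K) ≤ phi a :=
      phi_anti (Set.mem_Ici.mpr ha.le) (Set.mem_Ici.mpr (by positivity)) hK1
    have hphia0 : 0 ≤ phi a := phi_nonneg ha.le
    calc (∫ t in box, scrL1 (1 / (1 + a * rad g (g.mulVec t))))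
        ≤ phi ((2:ℝ)^K) + ∑ k ∈ Finset.range (K+1),
            phi (((2:ℝ)^k - 1)/2) * (volume (E k ∩ box)).toReal := by
          rw [← hIh]; exact hIle
      _ ≤ phi a + 2048 * Real.log 3 * phi a := by
          have := le_trans hsum_le (le_trans hsum2 hfinal)
          linarith
      _ = (1 + 2048 * Real.log 3) * phi a := by ring
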